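/- arXiv:1707.08690 — 2 statements merged into one kernel-verified Lean document; each statement's English description precedes it below -/
import Mathlib

section
/- Let G be a split graph with split partitions (C, I) and (C', I'). If |C| = |C'| + 1, then C is a maximum clique of G, I' is a maximum independent set of G, and C' ⊂ C. -/
/-- `s` is an independent set of `G`. -/
def SimpleGraph.IsIndepSet' {V : Type} (G : SimpleGraph V) (s : Set V) : Prop :=
  s.Pairwise fun u v => ¬ G.Adj u v

/-- `(C, I)` is a split partition of `G`. -/
def SimpleGraph.IsSplitPartition {V : Type} (G : SimpleGraph V) (C I : Set V) : Prop :=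
  C ∪ I = Set.univ ∧ Disjoint C I ∧ G.IsClique C ∧ G.IsIndepSet' I

/-!
A clique and an independent set share at most one vertex. Hence every clique has at most
`|C'| + 1 = |C|` vertices and every independent set at most `|I| + 1 = |I'|` vertices, the last
equality because both partitions count all of `V`. Finally `C` meets `I'` in at most one vertex,
so at most one vertex of `C` lies outside `C'`; as `|C'| < |C|`, this forces `C' = C ∩ C'`.
-/

theorem Set.ncard_le_ncard_add_one_of_subset_union {α : Type*} [Finite α] {S A B : Set α}
    (hS : S ⊆ A ∪ B) (hSB : (S ∩ B).Subsingleton) : S.ncard ≤ A.ncard + 1 :=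
  calc S.ncard ≤ (A ∪ S ∩ B).ncard :=
        Set.ncard_le_ncard fun x hx => (hS hx).imp id fun hB => ⟨hx, hB⟩
    _ ≤ A.ncard + (S ∩ B).ncard := Set.ncard_union_le _ _
    _ ≤ A.ncard + 1 := Nat.add_le_add_left (Set.ncard_le_one_iff_subsingleton.mpr hSB) _

namespace SimpleGraph

variable {V : Type} {G : SimpleGraph V}

theorem IsClique.inter_subsingleton_of_isIndepSet' {K J : Set V} (hK : G.IsClique K)
    (hJ : G.IsIndepSet' J) : (K ∩ J).Subsingleton := by
  rintro a ⟨haK, haJ⟩ b ⟨hbK, hbJ⟩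
  by_contra hne
  exact hJ haJ hbJ hne (hK haK hbK hne)

namespace IsSplitPartition

variable {C I : Set V}

theorem ncard_add_ncard [Finite V] (h : G.IsSplitPartition C I) :
    C.ncard + I.ncard = Nat.card V := by
  rw [← Set.ncard_union_eq h.2.1, h.1, Set.ncard_univ]

theorem ncard_le_of_isClique [Finite V] (h : G.IsSplitPartition C I) {K : Set V}
    (hK : G.IsClique K) : K.ncard ≤ C.ncard + 1 :=
  Set.ncard_le_ncard_add_one_of_subset_union (h.1 ▸ Set.subset_univ K)
    (hK.inter_subsingleton_of_isIndepSet' h.2.2.2)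

theorem ncard_le_of_isIndepSet' [Finite V] (h : G.IsSplitPartition C I) {J : Set V}
    (hJ : G.IsIndepSet' J) : J.ncard ≤ I.ncard + 1 :=
  Set.ncard_le_ncard_add_one_of_subset_union (Set.union_comm C I ▸ h.1 ▸ Set.subset_univ J)
    (Set.inter_comm J C ▸ h.2.2.1.inter_subsingleton_of_isIndepSet' hJ)

theorem ssubset_of_isClique_of_ncard_lt [Finite V] (h : G.IsSplitPartition C I) {K : Set V}
    (hK : G.IsClique K) (hlt : C.ncard < K.ncard) : C ⊂ K := by
  have hKC : K.ncard ≤ (K ∩ C).ncard + 1 :=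
    Set.ncard_le_ncard_add_one_of_subset_union
      (fun x hx => (h.1 ▸ Set.mem_univ x : x ∈ C ∪ I).imp (fun hC => ⟨hx, hC⟩) id)
      (hK.inter_subsingleton_of_isIndepSet' h.2.2.2)
  have hCK : K ∩ C = C := Set.eq_of_subset_of_ncard_le Set.inter_subset_right (by omega)
  exact (hCK ▸ Set.inter_subset_left : C ⊆ K).ssubset_of_ne (by rintro rfl; omega)

end IsSplitPartition

end SimpleGraph

theorem stmt3 {V : Type} [Fintype V] (G : SimpleGraph V) (C I C' I' : Set V)
    (h : G.IsSplitPartition C I) (h' : G.IsSplitPartition C' I')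
    (hcard : C.ncard = C'.ncard + 1) :
    (G.IsClique C ∧ ∀ K : Set V, G.IsClique K → K.ncard ≤ C.ncard) ∧
    (G.IsIndepSet' I' ∧ ∀ J : Set V, G.IsIndepSet' J → J.ncard ≤ I'.ncard) ∧
    C' ⊂ C := by
  have hI' : I'.ncard = I.ncard + 1 := by
    have := h.ncard_add_ncard
    have := h'.ncard_add_ncard
    omega
  refine ⟨⟨h.2.2.1, fun K hK => ?_⟩, ⟨h'.2.2.2, fun J hJ => ?_⟩,
    h'.ssubset_of_isClique_of_ncard_lt h.2.2.1 (by omega)⟩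
  · exact hcard ▸ h'.ncard_le_of_isClique hK
  · exact hI' ▸ h.ncard_le_of_isIndepSet' hJ
end

section
/- Let G be a connected split graph with split partition (C, I) such that C is a maximum clique of G. If G is a unit interval graph (equivalently here, admits an interval representation), then |I| ≤ 2. Consequently, any connected split unit interval graph satisfies |I| ≤ 3 for every split partition (C, I). -/
/-- `rep` is a unit interval representation of `G`: each vertex `v` gets the
unit closed interval `[rep v, rep v + 1]`, and distinct vertices are adjacent
iff their intervals intersect. -/
def SimpleGraph.IsUnitIntervalRep {V : Type} (G : SimpleGraph V) (rep : V → ℝ) : Prop :=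
  ∀ u v : V, G.Adj u v ↔ u ≠ v ∧ |rep u - rep v| ≤ 1

/-!
Three pairwise non-adjacent vertices `u, v, w` of a unit interval graph have representatives
more than `1` apart, say `rep u + 1 < rep v` and `rep v + 1 < rep w`. In a connected split graph
`u` and `w` have neighbours in the clique `C`, and all of `C` lies within distance `1` of both of
them, hence within distance `1` of `v`. So `C ∪ {v}` is a clique, and `C` is not maximum.
If `|I| ≥ 4`, moving such a `v` into the clique gives a split partition whose clique is maximum
(a clique meets `I` in at most one vertex) and whose independent part still has three vertices.
-/

namespace SimpleGraph

variable {V : Type} {G : SimpleGraph V}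

theorem IsIndepSet'.inter_subsingleton {I K : Set V} (hI : G.IsIndepSet' I) (hK : G.IsClique K) :
    (K ∩ I).Subsingleton := by
  rintro x ⟨hxK, hxI⟩ y ⟨hyK, hyI⟩
  by_contra hxy
  exact hI hxI hyI hxy (hK hxK hyK hxy)

namespace IsSplitPartition

variable {C I : Set V}

theorem mem_clique_of_adj (hsplit : G.IsSplitPartition C I) {x y : V} (hx : x ∈ I)
    (hxy : G.Adj x y) : y ∈ C := by
  have hy : y ∈ C ∪ I := hsplit.1 ▸ Set.mem_univ y
  exact hy.resolve_right fun hyI => hsplit.2.2.2 hx hyI hxy.ne hxy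

theorem notMem_clique (hsplit : G.IsSplitPartition C I) {v : V} (hv : v ∈ I) : v ∉ C :=
  fun hvC => Set.disjoint_left.mp hsplit.2.1 hvC hv

theorem isClique_insert (hsplit : G.IsSplitPartition C I) {v : V}
    (hvC : ∀ c ∈ C, G.Adj v c) : G.IsClique (insert v C) :=
  SimpleGraph.isClique_insert.mpr ⟨hsplit.2.2.1, fun c hc _ => hvC c hc⟩

theorem insert_sdiff_singleton (hsplit : G.IsSplitPartition C I) {v : V}
    (hvC : ∀ c ∈ C, G.Adj v c) : G.IsSplitPartition (insert v C) (I \ {v}) := by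
  refine ⟨Set.eq_univ_of_forall fun x => ?_,
    Set.disjoint_insert_left.mpr ⟨fun hv => hv.2 rfl, hsplit.2.1.mono_right Set.sdiff_subset⟩,
    hsplit.isClique_insert hvC, hsplit.2.2.2.mono Set.sdiff_subset⟩
  rcases eq_or_ne x v with rfl | hxv
  · exact Or.inl (Set.mem_insert _ _)
  · rcases (hsplit.1 ▸ Set.mem_univ x : x ∈ C ∪ I) with hxC | hxI
    exacts [Or.inl (Set.mem_insert_of_mem _ hxC), Or.inr ⟨hxI, hxv⟩]

theorem ncard_le_add_one_of_isClique [Finite V] (hsplit : G.IsSplitPartition C I) {K : Set V}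
    (hK : G.IsClique K) : K.ncard ≤ C.ncard + 1 := by
  have hKsub : K ⊆ C ∪ (K ∩ I) := fun x hx =>
    (hsplit.1 ▸ Set.mem_univ x : x ∈ C ∪ I).imp id fun hxI => ⟨hx, hxI⟩
  calc K.ncard ≤ (C ∪ (K ∩ I)).ncard := Set.ncard_le_ncard hKsub
    _ ≤ C.ncard + (K ∩ I).ncard := Set.ncard_union_le _ _
    _ ≤ C.ncard + 1 := by
      gcongr
      exact Set.ncard_le_one_iff_subsingleton.mpr (hsplit.2.2.2.inter_subsingleton hK)

end IsSplitPartition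

namespace IsUnitIntervalRep

variable {rep : V → ℝ}

theorem abs_sub_le_of_isClique (hrep : G.IsUnitIntervalRep rep) {K : Set V} (hK : G.IsClique K)
    {x y : V} (hx : x ∈ K) (hy : y ∈ K) : |rep x - rep y| ≤ 1 := by
  rcases eq_or_ne x y with rfl | hxy
  · simp
  · exact ((hrep x y).mp (hK hx hy hxy)).2

theorem one_lt_abs_sub_of_isIndepSet' (hrep : G.IsUnitIntervalRep rep) {I : Set V}
    (hI : G.IsIndepSet' I) {x y : V} (hx : x ∈ I) (hy : y ∈ I) (hxy : x ≠ y) :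
    1 < |rep x - rep y| :=
  lt_of_not_ge fun hle => hI hx hy hxy ((hrep x y).mpr ⟨hxy, hle⟩)

theorem exists_lt_of_two_lt_ncard (hrep : G.IsUnitIntervalRep rep) {I : Set V}
    (hI : G.IsIndepSet' I) (hcard : 2 < I.ncard) :
    ∃ u ∈ I, ∃ v ∈ I, ∃ w ∈ I, rep u + 1 < rep v ∧ rep v + 1 < rep w := by
  obtain ⟨a, ha, b, hb, c, hc, hab, hac, hbc⟩ :=
    (Set.two_lt_ncard (Set.finite_of_ncard_pos (by omega))).mp hcard
  rcases lt_abs.mp (hrep.one_lt_abs_sub_of_isIndepSet' hI ha hb hab) with h₁ | h₁ <;>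
    rcases lt_abs.mp (hrep.one_lt_abs_sub_of_isIndepSet' hI ha hc hac) with h₂ | h₂ <;>
    rcases lt_abs.mp (hrep.one_lt_abs_sub_of_isIndepSet' hI hb hc hbc) with h₃ | h₃ <;>
    first
    | exact ⟨a, ha, b, hb, c, hc, by linarith, by linarith⟩
    | exact ⟨a, ha, c, hc, b, hb, by linarith, by linarith⟩
    | exact ⟨b, hb, a, ha, c, hc, by linarith, by linarith⟩
    | exact ⟨b, hb, c, hc, a, ha, by linarith, by linarith⟩
    | exact ⟨c, hc, a, ha, b, hb, by linarith, by linarith⟩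
    | exact ⟨c, hc, b, hb, a, ha, by linarith, by linarith⟩

variable {C I : Set V}

theorem exists_forall_adj_of_two_lt_ncard (hrep : G.IsUnitIntervalRep rep) (hconn : G.Connected)
    (hsplit : G.IsSplitPartition C I) (hcard : 2 < I.ncard) :
    ∃ v ∈ I, ∀ c ∈ C, G.Adj v c := by
  obtain ⟨u, hu, v, hv, w, hw, huv, hvw⟩ := hrep.exists_lt_of_two_lt_ncard hsplit.2.2.2 hcard
  have : Nontrivial V := nontrivial_of_ne u v (by rintro rfl; linarith)
  obtain ⟨cu, hcu⟩ := hconn.preconnected.exists_adj_of_nontrivial u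
  obtain ⟨cw, hcw⟩ := hconn.preconnected.exists_adj_of_nontrivial w
  refine ⟨v, hv, fun x hx =>
    (hrep v x).mpr ⟨fun hvx => hsplit.notMem_clique hv (hvx ▸ hx), ?_⟩⟩
  have hxu := hrep.abs_sub_le_of_isClique hsplit.2.2.1 hx (hsplit.mem_clique_of_adj hu hcu)
  have hxw := hrep.abs_sub_le_of_isClique hsplit.2.2.1 hx (hsplit.mem_clique_of_adj hw hcw)
  have hu1 := ((hrep u cu).mp hcu).2
  have hw1 := ((hrep w cw).mp hcw).2
  rw [abs_le] at hxu hxw hu1 hw1 ⊢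
  constructor <;> linarith

theorem ncard_le_two_of_forall_isClique_ncard_le [Finite V] (hrep : G.IsUnitIntervalRep rep)
    (hconn : G.Connected) (hsplit : G.IsSplitPartition C I)
    (hmax : ∀ K : Set V, G.IsClique K → K.ncard ≤ C.ncard) :
    I.ncard ≤ 2 := by
  by_contra! hcard
  obtain ⟨v, hv, hvC⟩ := hrep.exists_forall_adj_of_two_lt_ncard hconn hsplit hcard
  have := hmax _ (hsplit.isClique_insert hvC)
  rw [Set.ncard_insert_of_notMem (hsplit.notMem_clique hv)] at this
  omega

end IsUnitIntervalRep

end SimpleGraph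

theorem stmt11 {V : Type} [Fintype V] (G : SimpleGraph V)
    (hconn : G.Connected) (rep : V → ℝ) (hrep : G.IsUnitIntervalRep rep)
    (C I : Set V) (hsplit : G.IsSplitPartition C I) :
    ((∀ K : Set V, G.IsClique K → K.ncard ≤ C.ncard) → I.ncard ≤ 2) ∧
    I.ncard ≤ 3 := by
  refine ⟨hrep.ncard_le_two_of_forall_isClique_ncard_le hconn hsplit, ?_⟩
  by_contra! hcard
  obtain ⟨v, hv, hvC⟩ := hrep.exists_forall_adj_of_two_lt_ncard hconn hsplit (by omega)
  have hmax : ∀ K : Set V, G.IsClique K → K.ncard ≤ (insert v C).ncard := by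
    intro K hK
    rw [Set.ncard_insert_of_notMem (hsplit.notMem_clique hv)]
    exact hsplit.ncard_le_add_one_of_isClique hK
  have hI_diff := hrep.ncard_le_two_of_forall_isClique_ncard_le hconn
    (hsplit.insert_sdiff_singleton hvC) hmax
  have hI_card := Set.ncard_sdiff_singleton_add_one hv
  omega
end
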